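/- arXiv:2410.18818 — 5 statements merged into one kernel-verified Lean document; each statement's English description precedes it below -/
import Mathlib

section
/- For every real s with 0 < s < 1, setting b = 2·√(1/s² − 1), one has (b²/(2π)) · ∫₀¹ (2s − 2/(1 + u²b²/4)) · √(1−u²) du = 2 − s − 1/s. -/
open MeasureTheory Real Set

/-!
With `c = 1/s` one has `b²/4 = c² - 1`, so the integrand splits as
`2s √(1-u²) - 2 √(1-u²)/(1 + (c²-1)u²)`. The first piece integrates to `π/4` (a quarter disc);
the second integrates to `π/(2(c+1))`, because
`√(1-u²)/(1 + (c²-1)u²) = (c g'(u) - arcsin'(u))/(c²-1)` for `g(u) = arcsin (c u/√(1 + (c²-1)u²))`,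
and `g(1) = arcsin 1`.
-/

theorem integral_sqrt_one_sub_sq_zero_one : ∫ u in (0 : ℝ)..1, √(1 - u ^ 2) = π / 4 := by
  have hint : ∀ a b : ℝ, IntervalIntegrable (fun u : ℝ => √(1 - u ^ 2)) volume a b :=
    fun a b => (by fun_prop : Continuous fun u : ℝ => √(1 - u ^ 2)).intervalIntegrable a b
  have hsymm : ∫ u in (-1 : ℝ)..0, √(1 - u ^ 2) = ∫ u in (0 : ℝ)..1, √(1 - u ^ 2) := by
    have := intervalIntegral.integral_comp_neg (a := 0) (b := 1) fun u : ℝ => √(1 - u ^ 2)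
    simp only [neg_sq, neg_zero] at this
    exact this.symm
  have := intervalIntegral.integral_add_adjacent_intervals (hint (-1) 0) (hint 0 1)
  rw [hsymm, integral_sqrt_one_sub_sq] at this
  linarith

theorem one_add_sq_sub_one_mul_sq_pos {c u : ℝ} (hc : c ≠ 0) (hu : u ∈ Icc (-1 : ℝ) 1) :
    0 < 1 + (c ^ 2 - 1) * u ^ 2 := by
  have h1u : 0 ≤ 1 - u ^ 2 := by nlinarith [hu.1, hu.2]
  rcases eq_or_ne u 0 with rfl | hu0
  · norm_num
  · nlinarith [sq_pos_of_ne_zero (mul_ne_zero hc hu0)]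

theorem hasDerivAt_arcsin_mul_div_sqrt (c : ℝ) {u : ℝ} (hu : u ∈ Ioo (-1 : ℝ) 1) :
    HasDerivAt (fun x => arcsin (c * x / √(1 + (c ^ 2 - 1) * x ^ 2)))
      (c / ((1 + (c ^ 2 - 1) * u ^ 2) * √(1 - u ^ 2))) u := by
  obtain ⟨hu₁, hu₂⟩ := hu
  have h1u : 0 < 1 - u ^ 2 := by nlinarith
  have hq : 0 < 1 + (c ^ 2 - 1) * u ^ 2 := by nlinarith [sq_nonneg (c * u)]
  have hq' : √(1 + (c ^ 2 - 1) * u ^ 2) ^ 2 = 1 + (c ^ 2 - 1) * u ^ 2 := sq_sqrt hq.le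
  have hsq : 0 < √(1 + (c ^ 2 - 1) * u ^ 2) := sqrt_pos.2 hq
  have h1w : 1 - (c * u / √(1 + (c ^ 2 - 1) * u ^ 2)) ^ 2
      = (1 - u ^ 2) / (1 + (c ^ 2 - 1) * u ^ 2) := by
    rw [div_pow, hq', eq_div_iff hq.ne', sub_mul, div_mul_cancel₀ _ hq.ne']; ring
  have hw : (c * u / √(1 + (c ^ 2 - 1) * u ^ 2)) ^ 2 < 1 := by
    have := div_pos h1u hq; linarith
  have hw₁ : c * u / √(1 + (c ^ 2 - 1) * u ^ 2) ≠ -1 := fun h => by rw [h] at hw; norm_num at hw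
  have hw₂ : c * u / √(1 + (c ^ 2 - 1) * u ^ 2) ≠ 1 := fun h => by rw [h] at hw; norm_num at hw
  have hqd : HasDerivAt (fun x => √(1 + (c ^ 2 - 1) * x ^ 2))
      ((c ^ 2 - 1) * (2 * u) / (2 * √(1 + (c ^ 2 - 1) * u ^ 2))) u := by
    simpa using (((hasDerivAt_pow 2 u).const_mul (c ^ 2 - 1)).const_add 1).sqrt hq.ne'
  refine ((hasDerivAt_arcsin hw₁ hw₂).comp u (((hasDerivAt_id u).const_mul c).div hqd
    hsq.ne')).congr_deriv ?_
  rw [h1w, sqrt_div h1u.le, hq', id]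
  field_simp
  rw [mul_comm (u ^ 2), hq']
  field_simp
  ring

theorem intervalIntegrable_sqrt_one_sub_sq_div {c : ℝ} (hc : c ≠ 0) :
    IntervalIntegrable (fun u => √(1 - u ^ 2) / (1 + (c ^ 2 - 1) * u ^ 2)) volume 0 1 := by
  refine ContinuousOn.intervalIntegrable_of_Icc zero_le_one ?_
  exact ContinuousOn.div (by fun_prop) (by fun_prop) fun _ hu =>
    (one_add_sq_sub_one_mul_sq_pos hc ⟨by linarith [hu.1], hu.2⟩).ne'

theorem integral_sqrt_one_sub_sq_div {c : ℝ} (hc : 0 < c) :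
    ∫ u in (0 : ℝ)..1, √(1 - u ^ 2) / (1 + (c ^ 2 - 1) * u ^ 2) = π / (2 * (c + 1)) := by
  rcases eq_or_ne c 1 with rfl | hc1
  · norm_num [integral_sqrt_one_sub_sq_zero_one]
  have ht : c ^ 2 - 1 ≠ 0 := by
    intro h; apply hc1; nlinarith
  have hcont : ContinuousOn
      (fun x => (c * arcsin (c * x / √(1 + (c ^ 2 - 1) * x ^ 2)) - arcsin x) / (c ^ 2 - 1))
      (Icc 0 1) := by
    have hq : ∀ x ∈ Icc (0 : ℝ) 1, √(1 + (c ^ 2 - 1) * x ^ 2) ≠ 0 := fun x hx =>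
      (sqrt_pos.2 (one_add_sq_sub_one_mul_sq_pos hc.ne' ⟨by linarith [hx.1], hx.2⟩)).ne'
    fun_prop (disch := exact hq)
  have hderiv : ∀ u ∈ Ioo (0 : ℝ) 1, HasDerivAt
      (fun x => (c * arcsin (c * x / √(1 + (c ^ 2 - 1) * x ^ 2)) - arcsin x) / (c ^ 2 - 1))
      (√(1 - u ^ 2) / (1 + (c ^ 2 - 1) * u ^ 2)) u := by
    intro u hu
    have hu' : u ∈ Ioo (-1 : ℝ) 1 := ⟨by linarith [hu.1], hu.2⟩
    refine ((((hasDerivAt_arcsin_mul_div_sqrt c hu').const_mul c).sub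
      (hasDerivAt_arcsin hu'.1.ne' hu'.2.ne)).div_const _).congr_deriv ?_
    have h1u : 0 < 1 - u ^ 2 := by nlinarith [hu'.1, hu'.2]
    have hq := one_add_sq_sub_one_mul_sq_pos hc.ne' (Ioo_subset_Icc_self hu')
    have hA : √(1 - u ^ 2) ^ 2 = 1 - u ^ 2 := sq_sqrt h1u.le
    have hA0 : √(1 - u ^ 2) ≠ 0 := (sqrt_pos.2 h1u).ne'
    field_simp
    rw [hA]
    ring
  rw [intervalIntegral.integral_eq_sub_of_hasDerivAt_of_le zero_le_one hcont hderiv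
    (intervalIntegrable_sqrt_one_sub_sq_div hc.ne')]
  have hsqrt_one : √(1 + (c ^ 2 - 1) * 1 ^ 2) = c := by
    rw [show 1 + (c ^ 2 - 1) * 1 ^ 2 = c ^ 2 by ring, sqrt_sq hc.le]
  have hc0 : c + 1 ≠ 0 := by positivity
  rw [hsqrt_one, mul_one, div_self hc.ne', arcsin_one]
  simp only [mul_zero, zero_div, arcsin_zero, sub_zero]
  field_simp
  ring

/-- For `0 < s < 1` and `b = 2√(1/s² − 1)`,
`(b²/(2π)) ∫₀¹ (2s − 2/(1 + u²b²/4)) √(1−u²) du = 2 − s − 1/s`. -/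
theorem statement4 (s : ℝ) (hs0 : 0 < s) (hs1 : s < 1) (b : ℝ)
    (hb : b = 2 * Real.sqrt (1 / s ^ 2 - 1)) :
    b ^ 2 / (2 * Real.pi) *
        ∫ u in (0:ℝ)..1, (2 * s - 2 / (1 + u ^ 2 * b ^ 2 / 4)) * Real.sqrt (1 - u ^ 2)
      = 2 - s - 1 / s := by
  have ht : 0 ≤ 1 / s ^ 2 - 1 := by
    rw [sub_nonneg, le_div_iff₀ (by positivity)]; nlinarith
  have hb2 : b ^ 2 = 4 * ((1 / s) ^ 2 - 1) := by
    rw [hb, mul_pow, sq_sqrt ht]; ring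
  have hsplit : ∀ u : ℝ, (2 * s - 2 / (1 + u ^ 2 * b ^ 2 / 4)) * √(1 - u ^ 2)
      = 2 * s * √(1 - u ^ 2) - 2 * (√(1 - u ^ 2) / (1 + ((1 / s) ^ 2 - 1) * u ^ 2)) := by
    intro u; rw [hb2]; ring
  simp_rw [hsplit]
  rw [intervalIntegral.integral_sub, intervalIntegral.integral_const_mul,
    intervalIntegral.integral_const_mul, integral_sqrt_one_sub_sq_zero_one,
    integral_sqrt_one_sub_sq_div (by positivity), hb2]
  · field_simp
    ring
  · exact ((by fun_prop : Continuous fun u : ℝ => √(1 - u ^ 2)).intervalIntegrable 0 1).const_mul _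
  · exact (intervalIntegrable_sqrt_one_sub_sq_div (by positivity)).const_mul _
end

section
/- There exists R > 0 such that for every complex ζ with |ζ| ≥ R: if Im ζ > 0 then log(|ζ − 2i|/|ζ + 2i|) + Im ζ > 0, and if Im ζ < 0 then log(|ζ − 2i|/|ζ + 2i|) + Im ζ < 0. -/
/-!
Write `a = ‖ζ - c i‖`, `b = ‖ζ + c i‖`. Then `b² - a² = 4 c Im ζ`, and `log x ≥ 1 - 1/x` applied to
`x = (a/b)²` gives `log (a/b) ≥ -2 c Im ζ / a²`. Hence `log (a/b) + s Im ζ > 0` for `Im ζ > 0` as soon as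
`s a² > 2c`, which holds far from the origin; the lower half plane follows by `ζ ↦ -ζ`, which swaps `a` and `b`.
-/

open Complex

lemma Real.one_sub_div_sq_le_two_mul_log_div {a b : ℝ} (ha : 0 < a) (hb : 0 < b) :
    1 - (b / a) ^ 2 ≤ 2 * Real.log (a / b) := by
  have h := Real.one_sub_inv_le_log_of_pos (pow_pos (div_pos ha hb) 2)
  rwa [Real.log_pow, ← inv_pow, inv_div, Nat.cast_two] at h

lemma Complex.norm_add_mul_I_sq (ζ : ℂ) (c : ℝ) :
    ‖ζ + c * I‖ ^ 2 = ‖ζ - c * I‖ ^ 2 + 4 * c * ζ.im := by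
  simp only [Complex.sq_norm, Complex.normSq_apply, add_re, sub_re, add_im, sub_im, mul_re,
    mul_im, ofReal_re, ofReal_im, I_re, I_im]
  ring

lemma Complex.log_norm_sub_div_norm_add_add_im_pos {ζ : ℂ} {c s : ℝ} (hc : 0 < c)
    (hy : 0 < ζ.im) (h : 2 * c < s * ‖ζ - c * I‖ ^ 2) :
    0 < Real.log (‖ζ - c * I‖ / ‖ζ + c * I‖) + s * ζ.im := by
  set a := ‖ζ - c * I‖
  set b := ‖ζ + c * I‖
  have hb2 : b ^ 2 = a ^ 2 + 4 * c * ζ.im := norm_add_mul_I_sq ζ c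
  have ha : 0 < a := by
    refine (norm_nonneg _).lt_of_ne fun ha0 => ?_
    rw [show a = 0 from ha0.symm] at h
    linarith
  have hb : 0 < b := by
    refine (norm_nonneg _).lt_of_ne fun hb0 => ?_
    rw [show b = 0 from hb0.symm] at hb2
    nlinarith
  have hratio : (b / a) ^ 2 = 1 + 4 * c * ζ.im / a ^ 2 := by
    rw [div_pow, hb2]
    field_simp
  have hslope : 2 * c * ζ.im / a ^ 2 < s * ζ.im := by
    rw [div_lt_iff₀ (by positivity)]
    nlinarith
  have hlog := Real.one_sub_div_sq_le_two_mul_log_div ha hb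
  rw [hratio] at hlog
  linarith [mul_div_assoc (4 * c) ζ.im (a ^ 2), mul_div_assoc (2 * c) ζ.im (a ^ 2)]

lemma Complex.log_norm_sub_div_norm_add_add_im_neg {ζ : ℂ} {c s : ℝ} (hc : 0 < c)
    (hy : ζ.im < 0) (h : 2 * c < s * ‖ζ + c * I‖ ^ 2) :
    Real.log (‖ζ - c * I‖ / ‖ζ + c * I‖) + s * ζ.im < 0 := by
  have hneg : ∀ w : ℂ, ‖-ζ + w‖ = ‖ζ - w‖ := fun w => by rw [← norm_neg]; ring_nf
  have hneg' : ∀ w : ℂ, ‖-ζ - w‖ = ‖ζ + w‖ := fun w => by rw [← norm_neg]; ring_nf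
  have key := log_norm_sub_div_norm_add_add_im_pos (ζ := -ζ) (s := s) hc (by simpa using hy)
    (by rwa [hneg'])
  rw [hneg, hneg', ← inv_div, Real.log_inv, neg_im] at key
  linarith

/-- There exists `R > 0` such that for all complex `ζ` with `|ζ| ≥ R`:
if `Im ζ > 0` then `log(|ζ−2i|/|ζ+2i|) + Im ζ > 0`, and if `Im ζ < 0` then
`log(|ζ−2i|/|ζ+2i|) + Im ζ < 0`. -/
theorem statement7 : ∃ R : ℝ, 0 < R ∧ ∀ ζ : ℂ, R ≤ ‖ζ‖ →
    (0 < ζ.im →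
      0 < Real.log (‖ζ - 2 * Complex.I‖ / ‖ζ + 2 * Complex.I‖)
            + ζ.im) ∧
    (ζ.im < 0 →
      Real.log (‖ζ - 2 * Complex.I‖ / ‖ζ + 2 * Complex.I‖)
          + ζ.im < 0) := by
  refine ⟨5, by norm_num, fun ζ hζ => ?_⟩
  have h2I : ‖(2 : ℂ) * I‖ = 2 := by simp
  have hfar : ∀ w : ℂ, ‖ζ‖ - ‖(2 : ℂ) * I‖ ≤ ‖w‖ → 2 * 2 < 1 * ‖w‖ ^ 2 := fun w hw => by
    nlinarith
  have hsub := hfar _ (norm_sub_norm_le ζ (2 * I))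
  have hadd := hfar _ (norm_sub_le_norm_add ζ (2 * I))
  constructor
  · intro hy
    simpa using log_norm_sub_div_norm_add_add_im_pos (c := 2) two_pos hy hsub
  · intro hy
    simpa using log_norm_sub_div_norm_add_add_im_neg (c := 2) two_pos hy hadd
end

section
/- Let μ be a probability measure on a measurable space Ω, let θ > 0, let (Xₙ)_{n≥1} be a sequence of measurable real-valued functions on Ω, let s be a real number, and let F : ℝ → ℝ be continuous at s. Suppose there is ε > 0 such that for every u ∈ (s − ε, s + ε), (1/n²)·log ∫ exp(−exp(Xₙ(ω) − (2n/θ)·u)) dμ(ω) converges to −F(u) as n → ∞. Then (1/n²)·log μ({ω : Xₙ(ω) ≤ (2n/θ)·s}) converges to −F(s) as n → ∞. -/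
/-! With `ℓ u n = ∫ exp (-exp (Xₙ - (2n/θ) u)) dμ` and `pₙ = μ {Xₙ ≤ (2n/θ) s}`, Markov's
inequality gives `pₙ ≤ e · ℓ s n`, while splitting the integral along `{Xₙ ≤ (2n/θ) s}` gives
`ℓ u n ≤ pₙ + exp (-exp ((2/θ) (s - u) n))` for `u < s`. The error term is doubly exponentially
small while `ℓ u n = exp (-O(n²))`, so eventually `pₙ ≥ ℓ u n / 2`. On the scale `n⁻² log` the
constants `e` and `1/2` disappear, so `limsup ≤ -F s` and `liminf ≥ -F u` for all `u < s` close
to `s`; continuity of `F` at `s` closes the gap. -/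

open MeasureTheory Filter Topology Real Set Asymptotics

section DoubleExponential

variable {Ω : Type*} [MeasurableSpace Ω] {μ : Measure Ω} {Y : Ω → ℝ}

lemma integrable_exp_neg_exp_sub [IsFiniteMeasure μ] (hY : AEMeasurable Y μ) (b : ℝ) :
    Integrable (fun ω => exp (-exp (Y ω - b))) μ := by
  refine .of_bound (by fun_prop) 1 (.of_forall fun ω => ?_)
  rw [norm_of_nonneg (exp_pos _).le, exp_le_one_iff, neg_nonpos]
  exact (exp_pos _).le

lemma integral_exp_neg_exp_sub_pos [IsFiniteMeasure μ] [NeZero μ] (hY : AEMeasurable Y μ)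
    (b : ℝ) : 0 < ∫ ω, exp (-exp (Y ω - b)) ∂μ :=
  integral_exp_pos (integrable_exp_neg_exp_sub hY b)

lemma measureReal_setOf_le_le_exp_one_mul_integral [IsFiniteMeasure μ] (hY : AEMeasurable Y μ)
    (a : ℝ) : μ.real {ω | Y ω ≤ a} ≤ exp 1 * ∫ ω, exp (-exp (Y ω - a)) ∂μ := by
  have hsub : {ω | Y ω ≤ a} ⊆ {ω | exp (-1) ≤ exp (-exp (Y ω - a))} :=
    fun ω (hω : Y ω ≤ a) => by simpa [exp_le_one_iff] using sub_nonpos.2 hω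
  have markov := mul_meas_ge_le_integral_of_nonneg (.of_forall fun ω => (exp_pos _).le)
    (integrable_exp_neg_exp_sub hY a) (exp (-1))
  calc μ.real {ω | Y ω ≤ a} = exp 1 * (exp (-1) * μ.real {ω | Y ω ≤ a}) := by
        rw [← mul_assoc, ← exp_add, add_neg_cancel, exp_zero, one_mul]
    _ ≤ exp 1 * ∫ ω, exp (-exp (Y ω - a)) ∂μ := by
        gcongr
        exact (mul_le_mul_of_nonneg_left (measureReal_mono hsub) (exp_pos _).le).trans markov

lemma integral_exp_neg_exp_sub_le_measureReal_add [IsProbabilityMeasure μ] (hY : Measurable Y)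
    (a b : ℝ) :
    ∫ ω, exp (-exp (Y ω - b)) ∂μ ≤ μ.real {ω | Y ω ≤ a} + exp (-exp (a - b)) := by
  set A := {ω | Y ω ≤ a}
  have hA : MeasurableSet A := measurableSet_le hY measurable_const
  have hpt : ∀ ω, exp (-exp (Y ω - b)) ≤ A.indicator 1 ω + exp (-exp (a - b)) := fun ω => by
    by_cases hω : ω ∈ A
    · have : exp (-exp (Y ω - b)) ≤ 1 := exp_le_one_iff.2 (neg_nonpos.2 (exp_pos _).le)
      rw [indicator_of_mem hω, Pi.one_apply]
      linarith [exp_pos (-exp (a - b))]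
    · rw [indicator_of_notMem hω, zero_add]
      gcongr
      exact (not_le.1 hω).le
  calc ∫ ω, exp (-exp (Y ω - b)) ∂μ
      ≤ ∫ ω, (A.indicator 1 ω + exp (-exp (a - b))) ∂μ :=
        integral_mono (integrable_exp_neg_exp_sub hY.aemeasurable b)
          (((integrable_const 1).indicator hA).add (integrable_const _)) hpt
    _ = μ.real A + exp (-exp (a - b)) := by
        rw [integral_add ((integrable_const 1).indicator hA) (integrable_const _),
          integral_indicator_one hA, integral_const, probReal_univ, one_smul]

end DoubleExponential

lemma eventually_mul_sq_add_le_exp_mul {c : ℝ} (hc : 0 < c) (A B : ℝ) :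
    ∀ᶠ n : ℕ in atTop, A * (n : ℝ) ^ 2 + B ≤ exp (c * n) := by
  have hpoly : (fun x : ℝ => A * x ^ 2 + B * x ^ 0) =o[atTop] fun x => exp (c * x) :=
    ((isLittleO_pow_exp_pos_mul_atTop 2 hc).const_mul_left A).add
      ((isLittleO_pow_exp_pos_mul_atTop 0 hc).const_mul_left B)
  filter_upwards [(hpoly.bound one_pos).natCast_atTop] with n hn
  simp only [pow_zero, mul_one, one_mul, norm_eq_abs, abs_exp] at hn
  exact (le_abs_self _).trans hn

lemma tendsto_inv_sq_mul_log_const_mul {ℓ : ℕ → ℝ} {L : ℝ} {k : ℝ} (hk : 0 < k)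
    (hℓ : ∀ n, 0 < ℓ n) (h : Tendsto (fun n : ℕ => 1 / (n : ℝ) ^ 2 * log (ℓ n)) atTop (𝓝 L)) :
    Tendsto (fun n : ℕ => 1 / (n : ℝ) ^ 2 * log (k * ℓ n)) atTop (𝓝 L) := by
  have hinv : Tendsto (fun n : ℕ => 1 / (n : ℝ) ^ 2) atTop (𝓝 0) := by
    simpa [Function.comp_def] using tendsto_inv_atTop_zero.comp
      ((tendsto_pow_atTop two_ne_zero).comp tendsto_natCast_atTop_atTop)
  simpa [log_mul hk.ne' (hℓ _).ne', mul_add] using (hinv.mul_const (log k)).add h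

lemma eventually_half_le_of_le_add_exp_neg_exp {p ℓ : ℕ → ℝ} {L c : ℝ} (hc : 0 < c)
    (hℓ : ∀ n, 0 < ℓ n) (h : Tendsto (fun n : ℕ => 1 / (n : ℝ) ^ 2 * log (ℓ n)) atTop (𝓝 L))
    (hle : ∀ n, ℓ n ≤ p n + exp (-exp (c * n))) :
    ∀ᶠ n : ℕ in atTop, ℓ n / 2 ≤ p n := by
  filter_upwards [h.eventually (eventually_gt_nhds (sub_one_lt L)),
    eventually_mul_sq_add_le_exp_mul hc (1 - L) (log 2), eventually_gt_atTop 0]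
    with n hrate hgrowth hn
  have hlog : (L - 1) * (n : ℝ) ^ 2 ≤ log (ℓ n) := by
    have hn2 : (0 : ℝ) < (n : ℝ) ^ 2 := by positivity
    rw [one_div, inv_mul_eq_div, lt_div_iff₀ hn2] at hrate
    exact hrate.le
  have htail : exp (-exp (c * n)) ≤ ℓ n / 2 := by
    rw [← exp_log (half_pos (hℓ n)), log_div (hℓ n).ne' two_ne_zero]
    gcongr
    linarith
  linarith [hle n]

lemma tendsto_inv_sq_mul_log_of_double_exp_bounds {p : ℕ → ℝ} {ℓ : ℝ → ℕ → ℝ} {F : ℝ → ℝ}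
    {s ε c : ℝ} (hε : 0 < ε) (hc : 0 < c) (hF : ContinuousAt F s) (hℓ : ∀ u n, 0 < ℓ u n)
    (hupper : ∀ n, p n ≤ exp 1 * ℓ s n)
    (hlower : ∀ u < s, ∀ n, ℓ u n ≤ p n + exp (-exp (c * (s - u) * n)))
    (hlim : ∀ u ∈ Ioo (s - ε) (s + ε),
      Tendsto (fun n : ℕ => 1 / (n : ℝ) ^ 2 * log (ℓ u n)) atTop (𝓝 (-F u))) :
    Tendsto (fun n : ℕ => 1 / (n : ℝ) ^ 2 * log (p n)) atTop (𝓝 (-F s)) := by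
  have hwindow : ∀ u ∈ Ioo (s - ε) s, u ∈ Ioo (s - ε) (s + ε) := fun u hu =>
    ⟨hu.1, hu.2.trans (lt_add_of_pos_right s hε)⟩
  have hhalf : ∀ u ∈ Ioo (s - ε) s, ∀ᶠ n : ℕ in atTop, ℓ u n / 2 ≤ p n := fun u hu =>
    eventually_half_le_of_le_add_exp_neg_exp (mul_pos hc (sub_pos.2 hu.2)) (hℓ u)
      (hlim u (hwindow u hu)) (hlower u hu.2)
  rw [tendsto_order]
  refine ⟨fun b hb => ?_, fun b hb => ?_⟩
  · obtain ⟨u, hFu, hu⟩ := (((hF.eventually (eventually_lt_nhds (lt_neg.1 hb))).filter_mono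
      nhdsWithin_le_nhds).and (Ioo_mem_nhdsLT (sub_lt_self s hε))).exists
    have hlim_half := tendsto_inv_sq_mul_log_const_mul one_half_pos (hℓ u) (hlim u (hwindow u hu))
    filter_upwards [hhalf u hu, hlim_half.eventually (eventually_gt_nhds (lt_neg.1 hFu))]
      with n hle hgt
    calc b < 1 / (n : ℝ) ^ 2 * log (1 / 2 * ℓ u n) := hgt
      _ ≤ 1 / (n : ℝ) ^ 2 * log (p n) := by
        gcongr
        · exact mul_pos one_half_pos (hℓ u n)
        · linarith
  · have hlim_e := tendsto_inv_sq_mul_log_const_mul (exp_pos 1) (hℓ s)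
      (hlim s ⟨sub_lt_self s hε, lt_add_of_pos_right s hε⟩)
    filter_upwards [hhalf (s - ε / 2) ⟨by linarith, by linarith⟩,
      hlim_e.eventually (eventually_lt_nhds hb)] with n hle hlt
    calc 1 / (n : ℝ) ^ 2 * log (p n) ≤ 1 / (n : ℝ) ^ 2 * log (exp 1 * ℓ s n) := by
          gcongr
          · exact (half_pos (hℓ _ n)).trans_le hle
          · exact hupper n
      _ < b := hlt

/-- Transfer of the large deviation limit from the doubly-exponentially
damped Laplace functional to the lower tail probability: if `F` is continuous at `s` and
for some `ε > 0` and all `u ∈ (s−ε, s+ε)`,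
`(1/n²) log ∫ exp(−exp(Xₙ − (2n/θ)u)) dμ → −F(u)`, then
`(1/n²) log μ{Xₙ ≤ (2n/θ)s} → −F(s)`. -/
theorem statement10 {Ω : Type*} [MeasurableSpace Ω] (μ : Measure Ω) [IsProbabilityMeasure μ]
    (θ : ℝ) (hθ : 0 < θ) (X : ℕ → Ω → ℝ) (hX : ∀ n, Measurable (X n))
    (s : ℝ) (F : ℝ → ℝ) (hF : ContinuousAt F s)
    (h : ∃ ε > 0, ∀ u ∈ Set.Ioo (s - ε) (s + ε),
      Tendsto (fun n : ℕ =>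
          (1 / (n : ℝ) ^ 2) *
            Real.log (∫ ω, Real.exp (-Real.exp (X n ω - 2 * (n : ℝ) / θ * u)) ∂μ))
        atTop (nhds (-F u))) :
    Tendsto (fun n : ℕ =>
        (1 / (n : ℝ) ^ 2) *
          Real.log ((μ {ω | X n ω ≤ 2 * (n : ℝ) / θ * s}).toReal))
      atTop (nhds (-F s)) := by
  obtain ⟨ε, hε, hlim⟩ := h
  refine tendsto_inv_sq_mul_log_of_double_exp_bounds
    (p := fun n => μ.real {ω | X n ω ≤ 2 * n / θ * s})
    (ℓ := fun u n => ∫ ω, exp (-exp (X n ω - 2 * n / θ * u)) ∂μ) hε (div_pos two_pos hθ) hF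
    (fun u n => integral_exp_neg_exp_sub_pos (hX n).aemeasurable _)
    (fun n => measureReal_setOf_le_le_exp_one_mul_integral (hX n).aemeasurable _)
    (fun u _ n => ?_) hlim
  have hgap : 2 / θ * (s - u) * n = 2 * n / θ * s - 2 * n / θ * u := by ring
  rw [hgap]
  exact integral_exp_neg_exp_sub_le_measureReal_add (μ := μ) (hX n) _ _
end

section
/- For every θ > 0, the function t ↦ Re ψ(θ·(1 + i t/2)) is strictly increasing on the interval [0, ∞), where ψ(z) = Γ′(z)/Γ(z) is the complex digamma function. -/
/-!
On the half-plane `0 < re z` the digamma function has the partial fraction expansion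
`ψ z = -γ + ∑ₙ (1 / (n + 1) - 1 / (z + n))`, and the real part of the `n`-th term at `z = a + i y`,
`1 / (n + 1) - (a + n) / ((a + n) ^ 2 + y ^ 2)`, increases strictly with `|y|`.

The expansion is proved on `(0, ∞)` by a Bohr–Mollerup type argument: both sides are monotone
(for `ψ` this is the log-convexity of `Γ`) and satisfy `f (x + 1) = f x + 1 / x`, so their
difference is `1`-periodic, and squeezing between `x` and `x + 1` far out shows it is constant.
The identity theorem then carries the expansion over to the half-plane.
-/

open MeasureTheory Filter Set

/-- The complex digamma function `ψ(z) = Γ'(z)/Γ(z)`. -/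
noncomputable def psiC (z : ℂ) : ℂ := deriv Complex.Gamma z / Complex.Gamma z

/-- The real digamma function `ψ(x) = Γ'(x)/Γ(x)`. -/
noncomputable def psiR (x : ℝ) : ℝ := deriv Real.Gamma x / Real.Gamma x

/-- `ψ''(x)`: the second derivative of the digamma function at the real point `x`. -/
noncomputable def psiR'' (x : ℝ) : ℝ := iteratedDeriv 2 psiR x

/-- `b` solves the defining equation for the endpoint at parameters `(s, θ)`:
`∫₀¹ (2θ·Re ψ(θ + i u θ b/2) + 2s)/(π√(1−u²)) du = 0`. -/
noncomputable def defEqn (s θ b : ℝ) : Prop :=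
  (∫ u in (0:ℝ)..1,
      (2 * θ * (psiC ((θ : ℂ) + Complex.I * (u : ℂ) * (θ : ℂ) * (b : ℂ) / 2)).re + 2 * s)
        / (Real.pi * Real.sqrt (1 - u ^ 2))) = 0

open Topology

section Recurrence

variable {f g : ℝ → ℝ}

lemma sub_add_natCast_eq_of_add_one (hf1 : ∀ x, 0 < x → f (x + 1) = f x + x⁻¹)
    (hg1 : ∀ x, 0 < x → g (x + 1) = g x + x⁻¹) {x : ℝ} (hx : 0 < x) (n : ℕ) :
    f (x + n) - g (x + n) = f x - g x := by
  induction n with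
  | zero => simp
  | succ n ih =>
    have hxn : 0 < x + n := by positivity
    rw [Nat.cast_succ, ← add_assoc, hf1 _ hxn, hg1 _ hxn, ← ih]
    ring

lemma sub_mem_Icc_of_monotoneOn_of_add_one (hf : MonotoneOn f (Ioi 0))
    (hf1 : ∀ x, 0 < x → f (x + 1) = f x + x⁻¹) {x y : ℝ} (hx : 0 < x) (hxy : x ≤ y)
    (hyx : y ≤ x + 1) : f y - f x ∈ Icc 0 x⁻¹ := by
  have h₁ := hf (mem_Ioi.2 hx) (mem_Ioi.2 (hx.trans_le hxy)) hxy
  have h₂ := hf (mem_Ioi.2 (hx.trans_le hxy)) (mem_Ioi.2 (by linarith)) hyx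
  rw [hf1 x hx] at h₂
  constructor <;> linarith

lemma sub_eq_sub_one_of_monotoneOn_of_add_one (hf : MonotoneOn f (Ioi 0))
    (hg : MonotoneOn g (Ioi 0)) (hf1 : ∀ x, 0 < x → f (x + 1) = f x + x⁻¹)
    (hg1 : ∀ x, 0 < x → g (x + 1) = g x + x⁻¹) {x : ℝ} (hx : 0 < x) :
    f x - g x = f 1 - g 1 := by
  set E := fun x => f x - g x
  have hE : ∀ {x : ℝ}, 0 < x → ∀ n : ℕ, E (x + n) = E x :=
    fun hx n => sub_add_natCast_eq_of_add_one hf1 hg1 hx n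
  have hclose : ∀ x y, 0 < x → x ≤ y → y ≤ x + 1 → E y = E x := by
    intro x y hx hxy hyx
    -- shifting by `n` keeps `E` but shrinks the squeeze bound to `(x + n)⁻¹`
    have hbound : ∀ n : ℕ, |E y - E x| ≤ (x + n)⁻¹ := by
      intro n
      have hxn : 0 < x + n := by positivity
      have hf' := sub_mem_Icc_of_monotoneOn_of_add_one hf hf1 hxn (y := y + n) (by linarith)
        (by linarith)
      have hg' := sub_mem_Icc_of_monotoneOn_of_add_one hg hg1 hxn (y := y + n) (by linarith)
        (by linarith)
      rw [← hE hx n, ← hE (hx.trans_le hxy) n, abs_le]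
      constructor <;> linarith [hf'.1, hf'.2, hg'.1, hg'.2]
    have hlim : Tendsto (fun n : ℕ => (x + n)⁻¹) atTop (𝓝 0) :=
      tendsto_inv_atTop_zero.comp (tendsto_atTop_add_const_left _ x tendsto_natCast_atTop_atTop)
    exact sub_eq_zero.1 (abs_nonpos_iff.1 (ge_of_tendsto' hlim hbound))
  calc E x = E (x + (1 : ℕ)) := (hE hx 1).symm
    _ = E (1 + ⌊x⌋₊) := by
      push_cast
      exact hclose _ _ (by positivity) (by linarith [Nat.floor_le hx.le])
        (by linarith [Nat.lt_floor_add_one x])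
    _ = E 1 := hE one_pos _

end Recurrence

namespace Complex

lemma ne_neg_natCast_of_re_pos {s : ℂ} (hs : 0 < s.re) (m : ℕ) : s ≠ -m := by
  rintro rfl
  simp only [neg_re, natCast_re, Left.neg_pos_iff] at hs
  linarith [m.cast_nonneg (α := ℝ)]

lemma digamma_ofReal {x : ℝ} (hx : 0 < x) :
    digamma x = ((deriv (Real.log ∘ Real.Gamma) x : ℝ) : ℂ) := by
  have hxre : 0 < (x : ℂ).re := by simpa using hx
  have hC := (differentiableAt_Gamma _ (ne_neg_natCast_of_re_pos hxre)).hasDerivAt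
  have hR := (Real.differentiableAt_Gamma fun m => by
    exact_mod_cast ne_neg_natCast_of_re_pos hxre m).hasDerivAt
  have hderiv : deriv Gamma x = deriv Real.Gamma x := by
    have := hC.comp_ofReal
    simp only [Gamma_ofReal] at this
    exact this.unique hR.ofReal_comp
  rw [Function.comp_def, (hR.log (Real.Gamma_pos_of_pos hx).ne').deriv, digamma_def,
    logDeriv_apply, hderiv, Gamma_ofReal, ofReal_div]

lemma analyticOnNhd_digamma : AnalyticOnNhd ℂ digamma {z | 0 < z.re} := by
  have hΓ : AnalyticOnNhd ℂ Gamma {z | 0 < z.re} :=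
    DifferentiableOn.analyticOnNhd
      (fun z hz => (differentiableAt_Gamma z (ne_neg_natCast_of_re_pos hz)).differentiableWithinAt)
      (isOpen_lt continuous_const continuous_re)
  exact hΓ.deriv.div hΓ fun z hz => Gamma_ne_zero (ne_neg_natCast_of_re_pos hz)

lemma re_digamma_ofReal_add_one {x : ℝ} (hx : 0 < x) :
    (digamma ↑(x + 1)).re = (digamma x).re + x⁻¹ := by
  rw [ofReal_add, ofReal_one, digamma_apply_add_one _ (ne_neg_natCast_of_re_pos (by simpa))]
  simp [← ofReal_inv]

lemma monotoneOn_re_digamma_ofReal : MonotoneOn (fun x : ℝ => (digamma x).re) (Ioi 0) :=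
  (Real.convexOn_log_Gamma.monotoneOn_deriv fun x hx =>
    (Real.differentiableOn_Gamma_Ioi.differentiableAt (Ioi_mem_nhds hx)).log
      (Real.Gamma_pos_of_pos hx).ne').congr fun x hx => by
    simp [digamma_ofReal hx]

end Complex

noncomputable def digammaSeriesTerm (n : ℕ) (z : ℂ) : ℂ := 1 / (n + 1) - 1 / (z + n)

noncomputable def digammaSeries (z : ℂ) : ℂ := ∑' n : ℕ, digammaSeriesTerm n z

lemma add_natCast_ne_zero_of_re_pos {z : ℂ} (hz : 0 < z.re) (n : ℕ) : z + n ≠ 0 :=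
  fun h => Complex.ne_neg_natCast_of_re_pos hz n (eq_neg_of_add_eq_zero_left h)

lemma norm_digammaSeriesTerm_le {r : ℝ} (hr : 0 < r) (hr1 : r ≤ 1) {z : ℂ} (hz : r ≤ z.re)
    (n : ℕ) : ‖digammaSeriesTerm n z‖ ≤ ‖z - 1‖ / r * (1 / ((n : ℝ) + 1) ^ 2) := by
  have hzn : r * (n + 1) ≤ ‖z + n‖ :=
    calc r * (n + 1) ≤ z.re + n := by nlinarith [n.cast_nonneg (α := ℝ)]
      _ = (z + n).re := by simp
      _ ≤ ‖z + n‖ := Complex.re_le_norm _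
  have hterm : digammaSeriesTerm n z = (z - 1) / ((n + 1) * (z + n)) := by
    have : (n : ℂ) + 1 ≠ 0 := by exact_mod_cast n.succ_ne_zero
    rw [digammaSeriesTerm, div_sub_div _ _ this (add_natCast_ne_zero_of_re_pos (hr.trans_le hz) n)]
    ring
  rw [hterm, norm_div, norm_mul, show ‖(n : ℂ) + 1‖ = n + 1 by norm_cast]
  calc ‖z - 1‖ / ((n + 1) * ‖z + n‖) ≤ ‖z - 1‖ / ((n + 1) * (r * (n + 1))) := by gcongr
    _ = _ := by field_simp

lemma summable_one_div_natCast_add_one_sq : Summable (fun n : ℕ => 1 / ((n : ℝ) + 1) ^ 2) := by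
  simpa using (summable_nat_add_iff 1).2 (Real.summable_one_div_nat_pow.2 one_lt_two)

lemma summable_digammaSeriesTerm {z : ℂ} (hz : 0 < z.re) :
    Summable fun n => digammaSeriesTerm n z :=
  .of_norm_bounded (summable_one_div_natCast_add_one_sq.mul_left _)
    (norm_digammaSeriesTerm_le (lt_min hz one_pos) (min_le_right _ _) (min_le_left _ _))

lemma differentiableOn_digammaSeries : DifferentiableOn ℂ digammaSeries {z | 0 < z.re} := by
  intro z hz
  set r := min (z.re / 2) 1
  have hr : 0 < r := lt_min (half_pos hz) one_pos
  set U := {w : ℂ | r < w.re ∧ ‖w‖ < ‖z‖ + 1}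
  have hU : IsOpen U :=
    (isOpen_lt continuous_const Complex.continuous_re).inter
      (isOpen_lt continuous_norm continuous_const)
  have hzU : z ∈ U := ⟨(min_le_left _ _).trans_lt (half_lt_self hz), lt_add_one _⟩
  refine (DifferentiableOn.differentiableAt ?_ (hU.mem_nhds hzU)).differentiableWithinAt
  refine Complex.differentiableOn_tsum_of_summable_norm
    (summable_one_div_natCast_add_one_sq.mul_left ((‖z‖ + 2) / r)) (fun n => ?_) hU
    (fun n w hw => ?_)
  · refine (differentiableOn_const _).sub ((differentiableOn_const _).div
      (differentiableOn_id.add_const _) fun w hw => ?_)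
    exact add_natCast_ne_zero_of_re_pos (hr.trans hw.1) n
  · refine (norm_digammaSeriesTerm_le hr (min_le_right _ _) hw.1.le n).trans ?_
    gcongr
    linarith [norm_sub_le w 1, norm_one (α := ℂ), hw.2]

lemma hasSum_sub_add_one_of_tendsto_zero {G : Type*} [AddCommGroup G] [TopologicalSpace G]
    [IsTopologicalAddGroup G] [T2Space G] {g : ℕ → G} (hg : Tendsto g atTop (𝓝 0))
    (hs : Summable fun n => g n - g (n + 1)) : HasSum (fun n => g n - g (n + 1)) (g 0) := by
  convert hs.hasSum
  refine tendsto_nhds_unique ?_ hs.hasSum.tendsto_sum_nat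
  simp_rw [Finset.sum_range_sub']
  simpa using hg.const_sub (g 0)

lemma digammaSeries_add_one {z : ℂ} (hz : 0 < z.re) :
    digammaSeries (z + 1) = digammaSeries z + z⁻¹ := by
  have hz1 : 0 < (z + 1).re := by
    rw [Complex.add_re, Complex.one_re]
    linarith
  have hdiff : ∀ n : ℕ, digammaSeriesTerm n (z + 1) - digammaSeriesTerm n z
      = (z + n)⁻¹ - (z + ↑(n + 1))⁻¹ := by
    intro n
    simp only [digammaSeriesTerm]
    push_cast
    ring
  have hs := (summable_digammaSeriesTerm hz1).sub (summable_digammaSeriesTerm hz)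
  simp only [hdiff] at hs
  have htel := hasSum_sub_add_one_of_tendsto_zero (g := fun n : ℕ => (z + n)⁻¹)
    (tendsto_inv₀_cobounded.comp
      ((tendsto_const_add_cobounded z).comp tendsto_natCast_atTop_cobounded)) hs
  have hsub : digammaSeries (z + 1) - digammaSeries z = z⁻¹ := by
    rw [digammaSeries, digammaSeries,
      ← (summable_digammaSeriesTerm hz1).tsum_sub (summable_digammaSeriesTerm hz), funext hdiff]
    simpa using htel.tsum_eq
  rw [← hsub, add_sub_cancel]

open Complex in
lemma re_digammaSeriesTerm (n : ℕ) (z : ℂ) :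
    (digammaSeriesTerm n z).re = 1 / (n + 1) - (z.re + n) / ((z.re + n) ^ 2 + z.im ^ 2) := by
  have : ((n : ℂ) + 1) = ((n + 1 : ℝ) : ℂ) := by push_cast; rfl
  simp only [digammaSeriesTerm, one_div, sub_re, inv_re, normSq_apply, add_re, add_im,
    natCast_re, natCast_im, this, ofReal_re, ofReal_im]
  field_simp
  ring

lemma re_digammaSeriesTerm_lt {z w : ℂ} (hz : 0 < z.re) (hre : z.re = w.re)
    (him : |z.im| < |w.im|) (n : ℕ) : (digammaSeriesTerm n z).re < (digammaSeriesTerm n w).re := by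
  rw [re_digammaSeriesTerm, re_digammaSeriesTerm, ← hre]
  have hc : 0 < z.re + n := by positivity
  have := sq_lt_sq.2 him
  gcongr

lemma digammaSeries_ofReal (x : ℝ) :
    digammaSeries x = ((∑' n : ℕ, (1 / (n + 1) - 1 / (x + n)) : ℝ) : ℂ) := by
  rw [Complex.ofReal_tsum, digammaSeries]
  push_cast
  rfl

lemma monotoneOn_re_digammaSeries_ofReal :
    MonotoneOn (fun x : ℝ => (digammaSeries x).re) (Ioi 0) := by
  intro x hx y hy hxy
  have hsum : ∀ x : ℝ, 0 < x → Summable fun n : ℕ => (1 / (n + 1) - 1 / (x + n) : ℝ) := by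
    intro x hx
    refine Complex.summable_ofReal.1 ?_
    simpa [digammaSeriesTerm] using summable_digammaSeriesTerm (z := x) (by simpa using hx)
  simp only [digammaSeries_ofReal, Complex.ofReal_re]
  refine (hsum x hx).tsum_le_tsum (fun n => ?_) (hsum y hy)
  have : 0 < x + n := by
    rw [mem_Ioi] at hx
    positivity
  gcongr

lemma re_digammaSeries_ofReal_add_one {x : ℝ} (hx : 0 < x) :
    (digammaSeries ↑(x + 1)).re = (digammaSeries x).re + x⁻¹ := by
  rw [Complex.ofReal_add, Complex.ofReal_one, digammaSeries_add_one (by simpa)]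
  simp [← Complex.ofReal_inv]

open Complex in
lemma digamma_ofReal_eq_neg_eulerMascheroni_add_digammaSeries {x : ℝ} (hx : 0 < x) :
    digamma x = -Real.eulerMascheroniConstant + digammaSeries x := by
  have key := sub_eq_sub_one_of_monotoneOn_of_add_one monotoneOn_re_digamma_ofReal
    monotoneOn_re_digammaSeries_ofReal (fun _ => re_digamma_ofReal_add_one)
    (fun _ => re_digammaSeries_ofReal_add_one) hx
  have hS1 : digammaSeries 1 = 0 := by
    simp [digammaSeries, digammaSeriesTerm, add_comm]
  simp only [ofReal_one, digamma_one, hS1, neg_re, ofReal_re, zero_re, sub_zero] at key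
  apply Complex.ext
  · simp only [add_re, neg_re, ofReal_re]
    linarith
  · simp [digamma_ofReal hx, digammaSeries_ofReal]

lemma frequently_nhdsNE_one_of_forall_ofReal_pos {p : ℂ → Prop} (h : ∀ x : ℝ, 0 < x → p x) :
    ∃ᶠ z in 𝓝[≠] (1 : ℂ), p z := by
  have hmaps : MapsTo ((↑) : ℝ → ℂ) {1}ᶜ {1}ᶜ := fun x hx => by simpa using hx
  refine (Complex.continuous_ofReal.continuousWithinAt.tendsto_nhdsWithin hmaps).frequently ?_
  exact ((eventually_nhdsWithin_of_eventually_nhds (eventually_gt_nhds one_pos)).mono h).frequently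

open Complex in
theorem digamma_eq_neg_eulerMascheroni_add_digammaSeries {z : ℂ} (hz : 0 < z.re) :
    digamma z = -Real.eulerMascheroniConstant + digammaSeries z := by
  have hU : IsOpen {z : ℂ | 0 < z.re} := isOpen_lt continuous_const continuous_re
  have hS : AnalyticOnNhd ℂ (fun z => -Real.eulerMascheroniConstant + digammaSeries z)
      {z : ℂ | 0 < z.re} :=
    analyticOnNhd_const.add (differentiableOn_digammaSeries.analyticOnNhd hU)
  have h1 : (1 : ℂ) ∈ {z : ℂ | 0 < z.re} := by simp
  exact analyticOnNhd_digamma.eqOn_of_preconnected_of_frequently_eq hS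
    (convex_halfSpace_re_gt 0).isPreconnected h1
    (frequently_nhdsNE_one_of_forall_ofReal_pos fun x hx =>
      digamma_ofReal_eq_neg_eulerMascheroni_add_digammaSeries hx) hz

theorem re_digamma_lt_of_abs_im_lt {z w : ℂ} (hz : 0 < z.re) (hre : z.re = w.re)
    (him : |z.im| < |w.im|) : (Complex.digamma z).re < (Complex.digamma w).re := by
  have hw : 0 < w.re := hre ▸ hz
  rw [digamma_eq_neg_eulerMascheroni_add_digammaSeries hz,
    digamma_eq_neg_eulerMascheroni_add_digammaSeries hw, Complex.add_re, Complex.add_re,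
    add_lt_add_iff_left]
  exact hasSum_lt (fun n => (re_digammaSeriesTerm_lt hz hre him n).le)
    (re_digammaSeriesTerm_lt hz hre him 0) (Complex.hasSum_re (summable_digammaSeriesTerm hz).hasSum)
    (Complex.hasSum_re (summable_digammaSeriesTerm hw).hasSum)

lemma psiC_eq_digamma : psiC = Complex.digamma := rfl

/-- For every `θ > 0`, the function `t ↦ Re ψ(θ(1 + i t/2))` is strictly
increasing on `[0, ∞)`. -/
theorem statement15 (θ : ℝ) (hθ : 0 < θ) :
    StrictMonoOn (fun t : ℝ => (psiC ((θ : ℂ) * (1 + Complex.I * (t : ℂ) / 2))).re)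
      (Set.Ici (0 : ℝ)) := by
  rw [psiC_eq_digamma]
  intro t₁ ht₁ t₂ ht₂ hlt
  rw [mem_Ici] at ht₁ ht₂
  have him : ∀ t : ℝ, ((θ : ℂ) * (1 + Complex.I * t / 2)).im = θ * t / 2 := fun t => by
    simp [mul_div_assoc]
  refine re_digamma_lt_of_abs_im_lt (by simpa using hθ) (by simp) ?_
  rw [him, him, abs_of_nonneg (by positivity), abs_of_nonneg (by positivity)]
  gcongr
end

section
/- For every θ > 0 and every real s, the function H(b) = ∫₀¹ (θ·Re ψ(θ + i u θ b/2) + s)/√(1 − u²) du tends to +∞ as b → +∞, where ψ(z) = Γ′(z)/Γ(z) is the complex digamma function. -/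
open MeasureTheory Filter Set

/-!
For `Re z > 0` the digamma function has the series `ψ z + γ = ∑ (1 / (n + 1) - 1 / (n + z))`. On the
real axis this follows from the recursion `ψ (x + 1) = ψ x + 1 / x` and the convexity of `log Γ`,
which squeezes `ψ (N + x)` between `log (N + x - 1)` and `log (N + x)`; the identity theorem
extends it to the half-plane. Consequently
`Re ψ (θ + i y) - ψ θ = ∑ (1 / (n + θ) - (n + θ) / ((n + θ) ^ 2 + y ^ 2))`, a sum of nonnegative
terms that increase with `|y|` towards `1 / (n + θ)`, whose sum diverges; so `Re ψ (θ + i y)`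
increases to `+∞`. In `H b` the numerator is then at least its value at `u = 0` on `[0, 1/2]`, and
at least `θ Re ψ (θ + i θ b / 4) + s → ∞` on `[1/2, 1]`.
-/

open Topology

local notation "γ" => Real.eulerMascheroniConstant

section RealDigamma

open Real

lemma psiR_eq_deriv_log_Gamma {x : ℝ} (hx : 0 < x) : psiR x = deriv (log ∘ Gamma) x := by
  rw [psiR, Function.comp_def, deriv.log
    (differentiableOn_Gamma_Ioi.differentiableAt (Ioi_mem_nhds hx)) (Gamma_pos_of_pos hx).ne']

lemma psiR_one : psiR 1 = -γ := by
  rw [psiR, Gamma_one, div_one, hasDerivAt_Gamma_one.deriv]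

lemma differentiableAt_log_Gamma {x : ℝ} (hx : 0 < x) : DifferentiableAt ℝ (log ∘ Gamma) x :=
  (differentiableOn_Gamma_Ioi.differentiableAt (Ioi_mem_nhds hx)).log (Gamma_pos_of_pos hx).ne'

lemma log_Gamma_add_one {x : ℝ} (hx : 0 < x) : log (Gamma (x + 1)) = log (Gamma x) + log x := by
  rw [Gamma_add_one hx.ne', log_mul hx.ne' (Gamma_pos_of_pos hx).ne', add_comm]

lemma psiR_add_one {x : ℝ} (hx : 0 < x) : psiR (x + 1) = psiR x + 1 / x := by
  rw [psiR_eq_deriv_log_Gamma (by positivity), psiR_eq_deriv_log_Gamma hx, ← deriv_comp_add_const,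
    one_div, ← deriv_log, ← deriv_add (differentiableAt_log_Gamma hx) (differentiableAt_log hx.ne')]
  refine EventuallyEq.deriv_eq ?_
  filter_upwards [eventually_gt_nhds hx] with y hy
  simp only [Function.comp_apply, Pi.add_apply, log_Gamma_add_one hy]

lemma psiR_nat_add {x : ℝ} (hx : 0 < x) (N : ℕ) :
    psiR (N + x) = psiR x + ∑ n ∈ Finset.range N, 1 / (n + x) := by
  induction N with
  | zero => simp
  | succ N ih =>
    rw [Nat.cast_succ, add_right_comm, psiR_add_one (by positivity), ih, Finset.sum_range_succ,
      add_assoc]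

lemma psiR_le_log {x : ℝ} (hx : 0 < x) : psiR x ≤ log x := by
  refine (psiR_eq_deriv_log_Gamma hx ▸ convexOn_log_Gamma.deriv_le_slope hx
    (by positivity : 0 < x + 1) (by linarith) (differentiableAt_log_Gamma hx)).trans_eq ?_
  rw [slope_def_field, add_sub_cancel_left, div_one, Function.comp_apply, Function.comp_apply,
    log_Gamma_add_one hx, add_sub_cancel_left]

lemma log_le_psiR_add_one {x : ℝ} (hx : 0 < x) : log x ≤ psiR (x + 1) := by
  have hx1 : 0 < x + 1 := by positivity
  refine le_of_eq_of_le ?_ (psiR_eq_deriv_log_Gamma hx1 ▸ convexOn_log_Gamma.slope_le_deriv hx hx1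
    (by linarith) (differentiableAt_log_Gamma hx1))
  rw [slope_def_field, add_sub_cancel_left, div_one, Function.comp_apply, Function.comp_apply,
    log_Gamma_add_one hx, add_sub_cancel_left]

lemma tendsto_psiR_nat_add_sub_log {x : ℝ} (hx : 0 < x) :
    Tendsto (fun N : ℕ => psiR (N + x) - log N) atTop (𝓝 0) := by
  have hlog (c : ℝ) : Tendsto (fun N : ℕ => log (N + c) - log N) atTop (𝓝 0) :=
    (tendsto_log_comp_add_sub_log c).comp tendsto_natCast_atTop_atTop
  refine tendsto_of_tendsto_of_tendsto_of_le_of_le' (by simpa using hlog (x - 1)) (hlog x) ?_ ?_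
  · filter_upwards [eventually_ge_atTop 1] with N hN
    have hN' : (1 : ℝ) ≤ N := by exact_mod_cast hN
    have := log_le_psiR_add_one (x := N + (x - 1)) (by linarith)
    rw [add_assoc, sub_add_cancel] at this
    simpa using sub_le_sub_right this (log N)
  · filter_upwards with N
    exact sub_le_sub_right (psiR_le_log (by positivity)) _

lemma tendsto_sum_range_psiR {x : ℝ} (hx : 0 < x) :
    Tendsto (fun N : ℕ => ∑ n ∈ Finset.range N, (1 / ((n : ℝ) + 1) - 1 / (n + x))) atTop
      (𝓝 (psiR x + γ)) := by
  have h := ((tendsto_psiR_nat_add_sub_log one_pos).sub (tendsto_psiR_nat_add_sub_log hx)).const_add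
    (psiR x + γ)
  rw [sub_zero, add_zero] at h
  refine h.congr fun N => ?_
  rw [Finset.sum_sub_distrib, ← sub_eq_iff_eq_add'.mpr (psiR_nat_add hx N),
    ← sub_eq_iff_eq_add'.mpr (psiR_nat_add one_pos N), psiR_one]
  ring

end RealDigamma

section ComplexDigamma

lemma natCast_add_ne_zero_of_re_pos {z : ℂ} (hz : 0 < z.re) (n : ℕ) : (n : ℂ) + z ≠ 0 := by
  intro h
  have := congrArg Complex.re h
  simp only [Complex.add_re, Complex.natCast_re, Complex.zero_re] at this
  linarith [(n.cast_nonneg : (0 : ℝ) ≤ n)]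

lemma ne_neg_natCast_of_re_pos {z : ℂ} (hz : 0 < z.re) (m : ℕ) : z ≠ -m := fun h =>
  natCast_add_ne_zero_of_re_pos hz m (by rw [h, add_neg_cancel])

lemma differentiableOn_psiC : DifferentiableOn ℂ psiC {z : ℂ | 0 < z.re} := by
  have hU : IsOpen {z : ℂ | 0 < z.re} := isOpen_lt continuous_const Complex.continuous_re
  have hΓ : AnalyticOnNhd ℂ Complex.Gamma {z : ℂ | 0 < z.re} :=
    DifferentiableOn.analyticOnNhd (fun z hz => (Complex.differentiableAt_Gamma z
      (ne_neg_natCast_of_re_pos hz)).differentiableWithinAt) hU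
  exact fun z hz => ((hΓ.deriv z hz).differentiableAt.div (hΓ z hz).differentiableAt
    (Complex.Gamma_ne_zero_of_re_pos hz)).differentiableWithinAt

lemma psiC_ofReal {x : ℝ} (hx : 0 < x) : psiC x = psiR x := by
  have hΓ : DifferentiableAt ℂ Complex.Gamma x :=
    Complex.differentiableAt_Gamma x (ne_neg_natCast_of_re_pos (by simpa using hx))
  -- `Γ` is real on the real axis, so its complex derivative there is the real one.
  have hderiv : deriv Complex.Gamma x = deriv Real.Gamma x := by
    rw [← (funext Complex.Gamma_ofReal ▸ hΓ.hasDerivAt.comp_ofReal :).deriv]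
    exact ((Real.differentiableOn_Gamma_Ioi.differentiableAt (Ioi_mem_nhds hx)).hasDerivAt
      |>.ofReal_comp).deriv
  rw [psiC, psiR, hderiv, Complex.Gamma_ofReal, Complex.ofReal_div]

lemma summable_one_div_nat_add_sq {ε : ℝ} (hε : 0 < ε) :
    Summable fun n : ℕ => 1 / ((n : ℝ) + ε) ^ 2 := by
  refine ((Real.summable_one_div_nat_add_rpow ε 2).mpr one_lt_two).congr fun n => ?_
  rw [abs_of_pos (by positivity), Real.rpow_two]

noncomputable def digammaTerm (z : ℂ) (n : ℕ) : ℂ := 1 / ((n : ℂ) + 1) - 1 / (n + z)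

lemma norm_digammaTerm_le {z : ℂ} {ε : ℝ} (hε : 0 < ε) (hε1 : ε ≤ 1) (hz : ε ≤ z.re) (n : ℕ) :
    ‖digammaTerm z n‖ ≤ ‖z - 1‖ / ((n : ℝ) + ε) ^ 2 := by
  have hn1 : (n : ℝ) + ε ≤ ‖(n : ℂ) + 1‖ := by
    rw [← Nat.cast_add_one, Complex.norm_natCast]; push_cast; linarith
  have hnz : (n : ℝ) + ε ≤ ‖(n : ℂ) + z‖ :=
    le_trans (by simpa using hz) (Complex.re_le_norm _)
  have hne1 : (n : ℂ) + 1 ≠ 0 := by exact_mod_cast n.succ_ne_zero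
  rw [digammaTerm, div_sub_div _ _ hne1 (natCast_add_ne_zero_of_re_pos (hε.trans_le hz) n),
    norm_div, norm_mul, one_mul, mul_one, add_sub_add_left_eq_sub, sq]
  gcongr

lemma summable_digammaTerm {z : ℂ} (hz : 0 < z.re) :
    Summable (digammaTerm z) := by
  have hε : 0 < min 1 z.re := lt_min one_pos hz
  refine Summable.of_norm_bounded ((summable_one_div_nat_add_sq hε).mul_left ‖z - 1‖) fun n => ?_
  rw [mul_one_div]
  exact norm_digammaTerm_le hε (min_le_left _ _) (min_le_right _ _) n

lemma differentiableOn_tsum_digammaTerm :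
    DifferentiableOn ℂ (fun z => ∑' n, digammaTerm z n) {z : ℂ | 0 < z.re} := by
  intro z₀ hz₀
  set ε := min 1 (z₀.re / 2)
  have hε : 0 < ε := lt_min one_pos (half_pos hz₀)
  set U := {z : ℂ | ε < z.re ∧ ‖z‖ < ‖z₀‖ + 1}
  have hU : IsOpen U := (isOpen_lt continuous_const Complex.continuous_re).inter
    (isOpen_lt continuous_norm continuous_const)
  have hz₀U : z₀ ∈ U := ⟨(min_le_right _ _).trans_lt (half_lt_self hz₀), lt_add_one _⟩
  refine (DifferentiableOn.differentiableAt ?_ (hU.mem_nhds hz₀U)).differentiableWithinAt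
  refine Complex.differentiableOn_tsum_of_summable_norm
    ((summable_one_div_nat_add_sq hε).mul_left (‖z₀‖ + 2)) (fun n => ?_) hU fun n z hz => ?_
  · unfold digammaTerm
    refine (differentiableOn_const _).sub ((differentiableOn_const _).div
      ((differentiableOn_const _).add differentiableOn_id) fun z hz => ?_)
    exact natCast_add_ne_zero_of_re_pos (hε.trans hz.1) n
  · rw [mul_one_div]
    refine (norm_digammaTerm_le hε (min_le_left _ _) hz.1.le n).trans ?_
    gcongr
    linarith [norm_sub_le z 1, norm_one (α := ℂ), hz.2]

lemma hasSum_digammaTerm_ofReal {x : ℝ} (hx : 0 < x) :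
    HasSum (digammaTerm x) (psiC x + γ) := by
  refine (summable_digammaTerm (by simpa using hx)).hasSum_iff_tendsto_nat.mpr ?_
  rw [psiC_ofReal hx, ← Complex.ofReal_add]
  refine ((Complex.continuous_ofReal.tendsto _).comp (tendsto_sum_range_psiR hx)).congr fun N => ?_
  simp [digammaTerm]

lemma hasSum_digammaTerm {z : ℂ} (hz : 0 < z.re) :
    HasSum (digammaTerm z) (psiC z + γ) := by
  set U := {z : ℂ | 0 < z.re}
  have hU : IsOpen U := isOpen_lt continuous_const Complex.continuous_re
  have hψ : AnalyticOnNhd ℂ (fun z => psiC z + γ) U :=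
    (differentiableOn_psiC.add_const _).analyticOnNhd hU
  have hS := differentiableOn_tsum_digammaTerm.analyticOnNhd hU
  have hreal : ∃ᶠ w in 𝓝[≠] (1 : ℂ), psiC w + γ = ∑' n, digammaTerm w n := by
    have hofReal : Tendsto ((↑) : ℝ → ℂ) (𝓝[≠] 1) (𝓝[≠] 1) :=
      tendsto_nhdsWithin_iff.mpr ⟨Complex.continuous_ofReal.continuousWithinAt.tendsto.trans
        (by simp), eventually_nhdsWithin_of_forall fun x hx => by simpa using hx⟩
    refine hofReal.frequently (Eventually.frequently ?_)
    filter_upwards [nhdsWithin_le_nhds (eventually_gt_nhds one_pos)] with x hx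
    exact (hasSum_digammaTerm_ofReal hx).tsum_eq.symm
  convert (summable_digammaTerm hz).hasSum
  exact hψ.eqOn_of_preconnected_of_frequently_eq hS (convex_halfSpace_re_gt 0).isPreconnected
    (by simp [U]) hreal hz

end ComplexDigamma

lemma tendsto_atTop_of_hasSum_of_tendsto {α : Type*} {l : Filter α} {f : ℕ → α → ℝ} {S : α → ℝ}
    {L : ℕ → ℝ} (hS : ∀ y, HasSum (f · y) (S y)) (hf : ∀ n y, 0 ≤ f n y)
    (hfL : ∀ n, Tendsto (f n) l (𝓝 (L n)))
    (hL : Tendsto (fun N => ∑ n ∈ Finset.range N, L n) atTop atTop) :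
    Tendsto S l atTop := by
  refine tendsto_atTop.mpr fun M => ?_
  obtain ⟨N, hN⟩ := (hL.eventually_ge_atTop (M + 1)).exists
  have hpartial := tendsto_finsetSum (Finset.range N) fun n _ => hfL n
  filter_upwards [hpartial.eventually (eventually_ge_nhds (show M < _ by linarith))] with y hy
  exact hy.trans (sum_le_hasSum _ (fun n _ => hf n y) (hS y))

lemma hasSum_re_psiC_sub {θ : ℝ} (hθ : 0 < θ) (y : ℝ) :
    HasSum (fun n : ℕ => 1 / ((n : ℝ) + θ) - (n + θ) / ((n + θ) ^ 2 + y ^ 2))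
      ((psiC (θ + Complex.I * y)).re - (psiC θ).re) := by
  have h := Complex.hasSum_re <| (hasSum_digammaTerm (z := θ + Complex.I * y) (by simpa)).sub
    (hasSum_digammaTerm (z := θ) (by simpa))
  convert h using 1
  · funext n
    rw [digammaTerm, digammaTerm, sub_sub_sub_cancel_left, ← add_assoc]
    simp [Complex.normSq_apply]
    ring
  · simp

lemma re_psiC_mono {θ : ℝ} (hθ : 0 < θ) {y₁ y₂ : ℝ} (hy₁ : 0 ≤ y₁) (h : y₁ ≤ y₂) :
    (psiC (θ + Complex.I * y₁)).re ≤ (psiC (θ + Complex.I * y₂)).re := by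
  have := hasSum_le (fun n => ?_) (hasSum_re_psiC_sub hθ y₁) (hasSum_re_psiC_sub hθ y₂)
  · linarith
  · gcongr

lemma tendsto_re_psiC_atTop {θ : ℝ} (hθ : 0 < θ) :
    Tendsto (fun y : ℝ => (psiC (θ + Complex.I * y)).re) atTop atTop := by
  have hdiv : Tendsto (fun N => ∑ n ∈ Finset.range N, 1 / ((n : ℝ) + θ)) atTop atTop := by
    refine (not_summable_iff_tendsto_nat_atTop_of_nonneg fun n => by positivity).mp ?_
    have h := (Real.summable_one_div_nat_add_rpow θ 1).not.mpr (lt_irrefl 1)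
    simp_rw [Real.rpow_one] at h
    exact fun hs => h (hs.congr fun n => by rw [abs_of_pos (by positivity)])
  have hterm (n : ℕ) : Tendsto (fun y : ℝ => 1 / ((n : ℝ) + θ) - (n + θ) / ((n + θ) ^ 2 + y ^ 2))
      atTop (𝓝 (1 / ((n : ℝ) + θ))) := by
    simpa using (tendsto_const_nhds (x := 1 / ((n : ℝ) + θ))).sub (tendsto_const_nhds.div_atTop
      (tendsto_atTop_add_const_left _ ((n + θ) ^ 2) (tendsto_pow_atTop two_ne_zero)))
  have hnonneg (n : ℕ) (y : ℝ) : 0 ≤ 1 / ((n : ℝ) + θ) - (n + θ) / ((n + θ) ^ 2 + y ^ 2) := by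
    rw [sub_nonneg, div_le_div_iff₀ (by positivity) (by positivity)]
    nlinarith [sq_nonneg y]
  simpa using tendsto_atTop_add_const_right _ (psiC θ).re
    (tendsto_atTop_of_hasSum_of_tendsto (hasSum_re_psiC_sub hθ) hnonneg hterm hdiv)

lemma add_mul_integral_le_integral_mul {f w : ℝ → ℝ} {a b c m M : ℝ} (hac : a ≤ c) (hcb : c ≤ b)
    (hfw : IntervalIntegrable (fun u => f u * w u) volume a b)
    (hw : IntervalIntegrable w volume a b) (hw0 : ∀ u ∈ Icc a b, 0 ≤ w u)
    (hm : ∀ u ∈ Icc a c, m ≤ f u) (hM : ∀ u ∈ Icc c b, M ≤ f u) :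
    m * (∫ u in a..c, w u) + M * ∫ u in c..b, w u ≤ ∫ u in a..b, f u * w u := by
  have hac' : uIcc a c ⊆ uIcc a b := uIcc_subset_uIcc left_mem_uIcc (mem_uIcc_of_le hac hcb)
  have hcb' : uIcc c b ⊆ uIcc a b := uIcc_subset_uIcc (mem_uIcc_of_le hac hcb) right_mem_uIcc
  rw [← intervalIntegral.integral_add_adjacent_intervals (hfw.mono_set hac') (hfw.mono_set hcb'),
    ← intervalIntegral.integral_const_mul, ← intervalIntegral.integral_const_mul]
  gcongr
  · refine intervalIntegral.integral_mono_on hac ((hw.mono_set hac').const_mul m)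
      (hfw.mono_set hac') fun u hu => ?_
    exact mul_le_mul_of_nonneg_right (hm u hu) (hw0 u ⟨hu.1, hu.2.trans hcb⟩)
  · refine intervalIntegral.integral_mono_on hcb ((hw.mono_set hcb').const_mul M)
      (hfw.mono_set hcb') fun u hu => ?_
    exact mul_le_mul_of_nonneg_right (hM u hu) (hw0 u ⟨hac.trans hu.1, hu.2⟩)

lemma intervalIntegrable_inv_sqrt_one_sub_sq :
    IntervalIntegrable (fun u : ℝ => (√(1 - u ^ 2))⁻¹) volume 0 1 := by
  simpa only [Real.sqrt_inv] using
    Polynomial.Chebyshev.intervalIntegrable_sqrt_one_sub_sq_inv.mono_set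
      (uIcc_subset_uIcc (by simp) (by simp))

lemma le_integral_re_psiC_div_sqrt {θ : ℝ} (hθ : 0 < θ) (s : ℝ) {b : ℝ} (hb : 0 ≤ b) :
    (θ * (psiC θ).re + s) * (∫ u in (0 : ℝ)..1 / 2, (√(1 - u ^ 2))⁻¹) +
        (θ * (psiC (θ + Complex.I * (θ * b / 4 : ℝ))).re + s) *
          ∫ u in (1 / 2 : ℝ)..1, (√(1 - u ^ 2))⁻¹ ≤
      ∫ u in (0 : ℝ)..1,
        (θ * (psiC ((θ : ℂ) + Complex.I * (u : ℂ) * (θ : ℂ) * (b : ℂ) / 2)).re + s) /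
          √(1 - u ^ 2) := by
  have hintegrand (u : ℝ) :
      (θ * (psiC ((θ : ℂ) + Complex.I * u * θ * b / 2)).re + s) / √(1 - u ^ 2) =
        (θ * (psiC (θ + Complex.I * (u * θ * b / 2 : ℝ))).re + s) * (√(1 - u ^ 2))⁻¹ := by
    rw [div_eq_mul_inv]; push_cast; ring_nf
  simp_rw [hintegrand]
  have hψ : Continuous fun u : ℝ => psiC (θ + Complex.I * (u * θ * b / 2 : ℝ)) :=
    differentiableOn_psiC.continuousOn.comp_continuous (by fun_prop) fun u => by simpa using hθ
  have hψ_le {y₁ y₂ : ℝ} (hy₁ : 0 ≤ y₁) (h : y₁ ≤ y₂) :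
      θ * (psiC (θ + Complex.I * y₁)).re + s ≤ θ * (psiC (θ + Complex.I * y₂)).re + s :=
    add_le_add_left (mul_le_mul_of_nonneg_left (re_psiC_mono hθ hy₁ h) hθ.le) s
  refine add_mul_integral_le_integral_mul (by norm_num) (by norm_num)
    (intervalIntegrable_inv_sqrt_one_sub_sq.continuousOn_mul
      ((continuous_const.mul (Complex.continuous_re.comp hψ)).add continuous_const).continuousOn)
    intervalIntegrable_inv_sqrt_one_sub_sq (fun u _ => by positivity) (fun u hu => ?_)
    (fun u hu => hψ_le (by positivity) (by nlinarith [hu.1, mul_nonneg hθ.le hb]))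
  simpa using hψ_le le_rfl (by have := hu.1; positivity : 0 ≤ u * θ * b / 2)

/-- For `θ > 0` and any real `s`, the function
`H(b) = ∫₀¹ (θ·Re ψ(θ + i u θ b/2) + s)/√(1−u²) du` tends to `+∞` as `b → +∞`. -/
theorem statement16 (θ : ℝ) (hθ : 0 < θ) (s : ℝ) :
    Filter.Tendsto (fun b : ℝ =>
        ∫ u in (0:ℝ)..1,
          (θ * (psiC ((θ : ℂ) + Complex.I * (u : ℂ) * (θ : ℂ) * (b : ℂ) / 2)).re + s)
            / Real.sqrt (1 - u ^ 2))
      Filter.atTop Filter.atTop := by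
  have hκ : 0 < ∫ u in (1 / 2 : ℝ)..1, (√(1 - u ^ 2))⁻¹ := by
    refine intervalIntegral.intervalIntegral_pos_of_pos_on
      (intervalIntegrable_inv_sqrt_one_sub_sq.mono_set
        (uIcc_subset_uIcc (by simp [uIcc_of_le]; norm_num) (by simp))) (fun u hu => ?_) (by norm_num)
    have : 0 < 1 - u ^ 2 := by nlinarith [hu.1, hu.2]
    positivity
  have hlim : Tendsto (fun b : ℝ => θ * (psiC (θ + Complex.I * (θ * b / 4 : ℝ))).re + s)
      atTop atTop :=
    tendsto_atTop_add_const_right _ s (((tendsto_re_psiC_atTop hθ).comp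
      ((tendsto_id.const_mul_atTop hθ).atTop_div_const four_pos)).const_mul_atTop hθ)
  refine tendsto_atTop_mono' atTop
    ((eventually_ge_atTop 0).mono fun b hb => le_integral_re_psiC_div_sqrt hθ s hb) ?_
  exact tendsto_atTop_add_const_left _ _ (hlim.atTop_mul_const hκ)
end
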